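/- arXiv:1306.6369 — 4 statements merged into one kernel-verified Lean document; each statement's English description precedes it below -/
import Mathlib

section
/- Let G be a finite group and N a normal subgroup of G.ari Suppose that for every real element x of G whose order is a power of an odd prime, the conjugacy class size |x^G| is a power of 2 or is not divisible by 4. Then the same holds for N and for the quotient G/N: every real element of N (respectively of G/N) of odd prime power order has conjugacy class size in N (respectively in G/N) that is a power of 2 or not divisible by 4. -/
/-!
Class sizes only shrink to divisors when passing to `N` or to `G ⧸ N`: `|x^N| = |N : C_N(x)|`
divides `|G : C_G(x)|`, and `|(gN)^(G/N)|` divides `|g^G|`. So the condition passes to `N`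
at once, and for `G ⧸ N` it suffices to lift a real element `x̄` of odd `p`-power order to a
real `p`-element of `G`.

Lift `x̄` to a `p`-element `g`, let `M` be the preimage of `⟨x̄⟩` and `P` a Sylow
`p`-subgroup of `M` containing `g`. An element inverting `x̄` normalizes `⟨x̄⟩`, hence `M`, so
by the Frattini argument some `s` normalizing `P` inverts `x̄`; replace `s` by its `2`-part.
Then `w ↦ s w⁻¹ s⁻¹` is a permutation of `2`-power order of `P ∩ gN`, a set of odd size
`|P ∩ N|`, so it has a fixed point `w`: a real `p`-element lifting `x̄`.
-/

section

open Subgroup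

variable {G : Type*} [Group G]

theorem card_setOf_isConj_eq_index_centralizer (x : G) :
    Nat.card {y : G | IsConj x y} = (centralizer {x}).index := by
  have hclass : {y : G | IsConj x y} = MulAction.orbit (ConjAct G) x := by
    ext y
    rw [Set.mem_ofPred_eq, ConjAct.mem_orbit_conjAct, isConj_comm]
  rw [hclass, Nat.card_coe_set_eq, ← MulAction.index_stabilizer, centralizer_eq_comap_stabilizer]
  exact (index_comap_of_surjective _ ConjAct.toConjAct.surjective).symm

theorem Subgroup.relIndex_dvd_index_of_normal_right (H N : Subgroup G) [N.Normal]
    [N.FiniteIndex] : H.relIndex N ∣ H.index := by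
  obtain ⟨c, hc⟩ := relIndex_dvd_index_of_normal N H
  have hHN : N.relIndex H * (H.relIndex N * c) = N.relIndex H * H.index := by
    rw [mul_left_comm, ← hc, ← inf_relIndex_right, relIndex_mul_index inf_le_right,
      ← inf_relIndex_left, relIndex_mul_index inf_le_left]
  have hpos : 0 < N.relIndex H :=
    Nat.pos_of_dvd_of_pos ⟨c, hc⟩ (Nat.pos_of_ne_zero FiniteIndex.index_ne_zero)
  exact ⟨c, (Nat.eq_of_mul_eq_mul_left hpos hHN).symm⟩

theorem card_setOf_isConj_dvd_of_normal (N : Subgroup G) [N.Normal] [N.FiniteIndex] (x : N) :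
    Nat.card {y : N | IsConj x y} ∣ Nat.card {y : G | IsConj (x : G) y} := by
  rw [card_setOf_isConj_eq_index_centralizer, card_setOf_isConj_eq_index_centralizer]
  have hcentralizer : centralizer {x} = (centralizer {(x : G)}).subgroupOf N := by
    ext z
    simp [mem_centralizer_singleton_iff, mem_subgroupOf, Subtype.ext_iff]
  rw [hcentralizer]
  exact relIndex_dvd_index_of_normal_right _ N

theorem card_setOf_isConj_mk_dvd (N : Subgroup G) [N.Normal] (g : G) :
    Nat.card {y : G ⧸ N | IsConj (g : G ⧸ N) y} ∣ Nat.card {y : G | IsConj g y} := by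
  rw [card_setOf_isConj_eq_index_centralizer, card_setOf_isConj_eq_index_centralizer]
  calc (centralizer {(g : G ⧸ N)}).index
      ∣ ((centralizer {g}).map (QuotientGroup.mk' N)).index := by
        apply index_dvd_of_le
        simpa using map_centralizer_le_centralizer_image {g} (QuotientGroup.mk' N)
    _ ∣ (centralizer {g}).index := index_map_dvd _ (QuotientGroup.mk'_surjective N)

theorem two_pow_or_not_four_dvd_of_dvd {a b : ℕ} (hab : a ∣ b)
    (hb : (∃ m, b = 2 ^ m) ∨ ¬ 4 ∣ b) : (∃ m, a = 2 ^ m) ∨ ¬ 4 ∣ a := by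
  rcases hb with ⟨m, rfl⟩ | hb
  · obtain ⟨j, -, rfl⟩ := (Nat.dvd_prime_pow Nat.prime_two).mp hab
    exact Or.inl ⟨j, rfl⟩
  · exact Or.inr fun h4 => hb (h4.trans hab)

theorem exists_not_dvd_orderOf_pow_eq_prime_pow {q : ℕ} (hq : q.Prime) {g : G}
    (hg : IsOfFinOrder g) : ∃ e, ¬ q ∣ e ∧ ∃ n, orderOf (g ^ e) = q ^ n := by
  set m := orderOf g
  have hm : m ≠ 0 := hg.orderOf_pos.ne'
  refine ⟨m / q ^ m.factorization q, Nat.not_dvd_ordCompl hq hm, m.factorization q, ?_⟩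
  rw [orderOf_pow_of_dvd (Nat.ordCompl_pos q hm).ne' (Nat.ordCompl_dvd m q),
    Nat.div_div_self (Nat.ordProj_dvd m q) hm]

theorem exists_apply_eq_orderOf_eq_prime_pow {H : Type*} [Group H] [Finite G] {f : G →* H}
    (hf : Function.Surjective f) {p k : ℕ} (hp : p.Prime) {h : H} (hh : orderOf h = p ^ k) :
    ∃ g, f g = h ∧ ∃ n, orderOf g = p ^ n := by
  obtain ⟨g, rfl⟩ := hf h
  obtain ⟨e, hpe, n, hn⟩ :=
    exists_not_dvd_orderOf_pow_eq_prime_pow hp (isOfFinOrder_of_finite g)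
  have hcop : e.Coprime (orderOf (f g)) :=
    hh ▸ Nat.Coprime.pow_right k (Nat.coprime_comm.mp (hp.coprime_iff_not_dvd.mpr hpe))
  obtain ⟨u, hu⟩ := exists_pow_eq_self_of_coprime hcop
  refine ⟨(g ^ e) ^ u, by rw [map_pow, map_pow, hu], ?_⟩
  obtain ⟨j, -, hj⟩ := (Nat.dvd_prime_pow hp).mp (hn ▸ orderOf_pow_dvd (x := g ^ e) u)
  exact ⟨j, hj⟩

theorem conj_pow_eq_inv_of_odd {c x : G} (hc : c * x * c⁻¹ = x⁻¹) {e : ℕ} (he : Odd e) :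
    c ^ e * x * (c ^ e)⁻¹ = x⁻¹ := by
  obtain ⟨j, rfl⟩ := he
  have hc2 : Commute (c ^ 2) x := by
    have hc' : MulAut.conj c x = x⁻¹ := hc
    have : MulAut.conj (c ^ 2) x = x := by
      rw [pow_two, map_mul, MulAut.mul_apply, hc', map_inv, hc', inv_inv]
    rwa [MulAut.conj_apply, mul_inv_eq_iff_eq_mul] at this
  calc c ^ (2 * j + 1) * x * (c ^ (2 * j + 1))⁻¹
      = (c ^ 2) ^ j * (c * x * c⁻¹) * ((c ^ 2) ^ j)⁻¹ := by group
    _ = x⁻¹ := by rw [hc, ((hc2.pow_left j).inv_right).eq]; group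

theorem mem_normalizer_zpowers_of_conj_eq_inv {c x : G} (hc : c * x * c⁻¹ = x⁻¹) :
    c ∈ normalizer (zpowers x : Set G) := by
  rw [mem_normalizer_iff_map_conj_eq, MonoidHom.map_zpowers]
  simp [MulAut.conj_apply, hc]

theorem Sylow.exists_mul_mem_normalizer_map_subtype {p : ℕ} [Fact p.Prime] {H : Subgroup G}
    [Finite H] (P : Sylow p H) {t : G} (ht : t ∈ normalizer (H : Set G)) :
    ∃ m ∈ H, m * t ∈ normalizer ((P : Subgroup H).map H.subtype : Set G) := by
  let t' : normalizer (H : Set G) := ⟨t, ht⟩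
  have ht' : ∀ v : H, ((t' • v : H) : G) = t * v * t⁻¹ := fun _ => rfl
  obtain ⟨m, hm⟩ := MulAction.exists_smul_eq H (t' • P) P
  refine ⟨m, m.2, mem_normalizer_iff_map_conj_eq.mpr ?_⟩
  have hmap := congrArg (fun Q : Sylow p H => (Q : Subgroup H).map H.subtype) hm
  simp only [Sylow.smul_def, Sylow.pointwise_smul_def, Subgroup.pointwise_smul_def] at hmap
  conv_rhs => rw [← hmap]
  ext w
  simp only [mem_map, MonoidHom.coe_coe, MulAut.conj_apply]
  constructor
  · rintro ⟨_, ⟨v, hv, rfl⟩, rfl⟩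
    exact ⟨_, ⟨_, ⟨v, hv, rfl⟩, rfl⟩, by simp [ht', mul_assoc]⟩
  · rintro ⟨_, ⟨_, ⟨v, hv, rfl⟩, rfl⟩, rfl⟩
    exact ⟨_, ⟨v, hv, rfl⟩, by simp [ht', mul_assoc]⟩

theorem exists_mem_mk_eq_isConj_inv [Finite G] {P N : Subgroup G} [N.Normal]
    (hP : Odd (Nat.card P)) {a s : G} (ha : a ∈ P) (hs : s ∈ normalizer (P : Set G))
    {n : ℕ} (hs2 : s ^ 2 ^ n = 1)
    (hinv : (s : G ⧸ N) * a * (s : G ⧸ N)⁻¹ = (a : G ⧸ N)⁻¹) :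
    ∃ w ∈ P, (w : G ⧸ N) = a ∧ IsConj w w⁻¹ := by
  classical
  have : Fintype G := Fintype.ofFinite G
  let f : Equiv.Perm G := (Equiv.inv G).trans (MulAut.conj s).toEquiv
  have hf : ∀ w, f w = s * w⁻¹ * s⁻¹ := fun _ => rfl
  have hf2 : f ^ 2 = MulAut.toPerm G (MulAut.conj (s ^ 2)) := by
    ext w
    change s * (s * w⁻¹ * s⁻¹)⁻¹ * s⁻¹ = s ^ 2 * w * (s ^ 2)⁻¹
    simp [sq, mul_assoc]
  have hf1 : f ^ 2 ^ (n + 1) = 1 := by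
    rw [pow_succ', pow_mul, hf2, ← map_pow, ← map_pow, ← pow_mul, mul_comm, pow_mul, hs2,
      one_pow, map_one, map_one]
  have hinv' : (s : G ⧸ N) * (a : G ⧸ N)⁻¹ * (s : G ⧸ N)⁻¹ = a := by
    simpa [mul_assoc] using congrArg (·⁻¹) hinv
  let C : Set G := {w | w ∈ P ∧ (w : G ⧸ N) = a}
  have hC : ∀ w, f w ∈ C ↔ w ∈ C := by
    intro w
    have hmk : (f w : G ⧸ N) = a ↔ (w : G ⧸ N) = a := by
      conv_lhs => rw [← hinv']
      rw [hf, QuotientGroup.mk_mul, QuotientGroup.mk_mul, QuotientGroup.mk_inv,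
        QuotientGroup.mk_inv, mul_left_inj, mul_right_inj, inv_inj]
    rw [Set.mem_ofPred_eq, Set.mem_ofPred_eq, hmk, hf, ← mem_normalizer_iff.mp hs, inv_mem_iff]
  let σ := f.subtypePerm hC
  have hσ : σ ^ 2 ^ (n + 1) = 1 := by
    ext w
    simp [σ, hf1]
  have hcard : ¬ 2 ∣ Fintype.card C := by
    have hCN : C ≃ (P ⊓ N : Subgroup G) := (Equiv.mulLeft a⁻¹).subtypeEquiv fun w => by
      simp [C, mem_inf, mul_mem_cancel_left (inv_mem ha), QuotientGroup.eq, eq_comm]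
    rw [← Nat.card_eq_fintype_card, Nat.card_congr hCN]
    exact (hP.of_dvd_nat (card_dvd_of_le inf_le_left)).not_two_dvd_nat
  obtain ⟨⟨w, hwP, hwa⟩, hw⟩ := Equiv.Perm.exists_fixed_point_of_prime hcard hσ
  have hfix : s * w⁻¹ * s⁻¹ = w := congrArg Subtype.val hw
  exact ⟨w, hwP, hwa, (isConj_iff.mpr ⟨s, hfix⟩).symm⟩

theorem exists_mk_eq_isConj_inv_orderOf_eq_prime_pow [Finite G] (N : Subgroup G) [N.Normal]
    {p k : ℕ} (hp : p.Prime) (hpodd : Odd p) {x : G ⧸ N} (hx : IsConj x x⁻¹)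
    (hord : orderOf x = p ^ k) :
    ∃ g : G, (g : G ⧸ N) = x ∧ IsConj g g⁻¹ ∧ ∃ b, orderOf g = p ^ b := by
  have := Fact.mk hp
  obtain ⟨g, rfl, b, hgb⟩ :=
    exists_apply_eq_orderOf_eq_prime_pow (QuotientGroup.mk'_surjective N) hp hord
  obtain ⟨c, hc⟩ := isConj_iff.mp hx
  obtain ⟨t, rfl⟩ := QuotientGroup.mk'_surjective N c
  set x := QuotientGroup.mk' N g
  set M := (zpowers x).comap (QuotientGroup.mk' N)
  have ht : t ∈ normalizer (M : Set G) :=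
    le_normalizer_comap _ (mem_comap.mpr (mem_normalizer_zpowers_of_conj_eq_inv hc))
  have hgM : g ∈ M := mem_comap.mpr (mem_zpowers _)
  obtain ⟨P, hP⟩ : ∃ P : Sylow p M, zpowers (⟨g, hgM⟩ : M) ≤ P :=
    (IsPGroup.of_card (by rw [Nat.card_zpowers, orderOf_mk, hgb])).exists_le_sylow
  have hPp : IsPGroup p ((P : Subgroup M).map M.subtype) := P.isPGroup'.map _
  obtain ⟨m, hm, hmt⟩ := P.exists_mul_mem_normalizer_map_subtype ht
  have hmt_inv : QuotientGroup.mk' N (m * t) * x * (QuotientGroup.mk' N (m * t))⁻¹ = x⁻¹ := by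
    obtain ⟨i, hi⟩ := mem_zpowers_iff.mp (mem_comap.mp hm)
    rw [map_mul, ← hi]
    calc x ^ i * QuotientGroup.mk' N t * x * (x ^ i * QuotientGroup.mk' N t)⁻¹
        = x ^ i * (QuotientGroup.mk' N t * x * (QuotientGroup.mk' N t)⁻¹) * (x ^ i)⁻¹ := by
          group
      _ = x⁻¹ := by rw [hc]; group
  obtain ⟨e, he, n, hn⟩ :=
    exists_not_dvd_orderOf_pow_eq_prime_pow Nat.prime_two (isOfFinOrder_of_finite (m * t))
  obtain ⟨w, hwP, hwg, hw⟩ := exists_mem_mk_eq_isConj_inv (N := N) (a := g) (s := (m * t) ^ e)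
    (by obtain ⟨j, hj⟩ := hPp.exists_card_eq; exact hj ▸ hpodd.pow)
    (mem_map.mpr ⟨⟨g, hgM⟩, hP (mem_zpowers _), rfl⟩) (pow_mem hmt e)
    (hn ▸ pow_orderOf_eq_one _)
    (by simpa [x] using
      conj_pow_eq_inv_of_odd hmt_inv (Nat.odd_iff.mpr (Nat.two_dvd_ne_zero.mp he)))
  exact ⟨w, hwg, hw, by simpa using IsPGroup.iff_orderOf.mp hPp ⟨w, hwP⟩⟩

end

/-- The property "every real element of odd prime power order has conjugacy
class size a power of 2 or not divisible by 4" is inherited by normal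
subgroups and quotients. -/
theorem stmt_5 (G : Type*) [Group G] [Finite G] (N : Subgroup G) [N.Normal]
    (h : ∀ x : G, IsConj x x⁻¹ →
      (∃ p k : ℕ, p.Prime ∧ Odd p ∧ orderOf x = p ^ k) →
      (∃ m : ℕ, Nat.card {y : G | IsConj x y} = 2 ^ m) ∨
        ¬ (4 ∣ Nat.card {y : G | IsConj x y})) :
    (∀ x : N, IsConj x x⁻¹ →
      (∃ p k : ℕ, p.Prime ∧ Odd p ∧ orderOf x = p ^ k) →
      (∃ m : ℕ, Nat.card {y : N | IsConj x y} = 2 ^ m) ∨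
        ¬ (4 ∣ Nat.card {y : N | IsConj x y})) ∧
    (∀ x : G ⧸ N, IsConj x x⁻¹ →
      (∃ p k : ℕ, p.Prime ∧ Odd p ∧ orderOf x = p ^ k) →
      (∃ m : ℕ, Nat.card {y : G ⧸ N | IsConj x y} = 2 ^ m) ∨
        ¬ (4 ∣ Nat.card {y : G ⧸ N | IsConj x y})) := by
  constructor
  · rintro x hx ⟨p, k, hp, hpodd, hord⟩
    have hxG : IsConj (x : G) (x : G)⁻¹ := by simpa using N.subtype.map_isConj hx
    exact two_pow_or_not_four_dvd_of_dvd (card_setOf_isConj_dvd_of_normal N x)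
      (h x hxG ⟨p, k, hp, hpodd, by rwa [Subgroup.orderOf_coe]⟩)
  · rintro x hx ⟨p, k, hp, hpodd, hord⟩
    obtain ⟨g, rfl, hg, b, hgb⟩ :=
      exists_mk_eq_isConj_inv_orderOf_eq_prime_pow N hp hpodd hx hord
    exact two_pow_or_not_four_dvd_of_dvd (card_setOf_isConj_mk_dvd N g)
      (h g hg ⟨p, b, hp, hpodd, hgb⟩)
end

section
/- Let G be a finite group and let N be a subgroup of the center of G. If x is an element of G whose order is coprime to the order of N, then the conjugacy class size of x in G equals the conjugacy class size of the coset Nx in the quotient group G/N. -/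
/-! Two conjugates `y` and `yz` of `x` with `z ∈ N` central have the same order, while
the order of `z` divides `|N|` and so is coprime to that of `y`; then
`orderOf (y * z) = orderOf y * orderOf z` forces `z = 1`. Hence reduction mod `N` is
injective on the class of `x`, and it maps that class onto the class of `xN`. -/

lemma IsConj.orderOf_eq {G : Type*} [Group G] {x y : G} (h : IsConj x y) :
    orderOf x = orderOf y :=
  let ⟨c, hc⟩ := h
  hc.orderOf_eq (c : G)

lemma Commute.eq_one_of_orderOf_mul_eq {G : Type*} [Group G] {y z : G} (hyz : Commute y z)
    (hco : (orderOf y).Coprime (orderOf z)) (h : orderOf (y * z) = orderOf y) : z = 1 := by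
  rw [← orderOf_eq_one_iff]
  rcases (orderOf y).eq_zero_or_pos with hy | hy
  · rwa [hy, Nat.coprime_zero_left] at hco
  · rw [hyz.orderOf_mul_eq_mul_orderOf_of_coprime hco, Nat.mul_eq_left hy.ne'] at h
    exact h

lemma MonoidHom.image_setOf_isConj {G H : Type*} [Group G] [Group H] {f : G →* H}
    (hf : Function.Surjective f) (x : G) :
    f '' {y | IsConj x y} = {y | IsConj (f x) y} := by
  ext y
  constructor
  · rintro ⟨y, hxy, rfl⟩
    exact f.map_isConj hxy
  · intro hxy
    obtain ⟨c, rfl⟩ := isConj_iff.mp hxy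
    obtain ⟨g, rfl⟩ := hf c
    exact ⟨g * x * g⁻¹, isConj_iff.mpr ⟨g, rfl⟩, by simp⟩

lemma QuotientGroup.injOn_mk_setOf_isConj {G : Type*} [Group G] {N : Subgroup G} [N.Normal]
    (hN : N ≤ Subgroup.center G) {x : G} (hx : (orderOf x).Coprime (Nat.card N)) :
    Set.InjOn (QuotientGroup.mk : G → G ⧸ N) {y | IsConj x y} := by
  intro y₁ hy₁ y₂ hy₂ h
  have hz : y₁⁻¹ * y₂ ∈ N := QuotientGroup.eq.mp h
  have hco : (orderOf y₁).Coprime (orderOf (y₁⁻¹ * y₂)) := by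
    rw [← IsConj.orderOf_eq hy₁]
    exact hx.coprime_dvd_right (Subgroup.orderOf_dvd_natCard N hz)
  have hcomm : Commute y₁ (y₁⁻¹ * y₂) := Subgroup.mem_center_iff.mp (hN hz) y₁
  have hord : orderOf (y₁ * (y₁⁻¹ * y₂)) = orderOf y₁ := by
    rw [mul_inv_cancel_left, ← IsConj.orderOf_eq hy₁, ← IsConj.orderOf_eq hy₂]
  exact inv_mul_eq_one.mp (hcomm.eq_one_of_orderOf_mul_eq hco hord)

theorem stmt_6_general (G : Type*) [Group G] (N : Subgroup G) [N.Normal]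
    (hN : N ≤ Subgroup.center G) (x : G)
    (hx : Nat.Coprime (orderOf x) (Nat.card N)) :
    Nat.card {y : G | IsConj x y} =
      Nat.card {y : G ⧸ N | IsConj ((x : G ⧸ N)) y} := by
  have himage := MonoidHom.image_setOf_isConj (QuotientGroup.mk'_surjective N) x
  rw [QuotientGroup.coe_mk'] at himage
  rw [← himage, Nat.card_image_of_injOn (QuotientGroup.injOn_mk_setOf_isConj hN hx)]

/-- If `N` is a central subgroup of a finite group `G` and `x ∈ G` has order
coprime to `|N|`, then the conjugacy class size of `x` in `G` equals the
conjugacy class size of `Nx` in `G/N`. -/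
theorem stmt_6 (G : Type*) [Group G] [Finite G] (N : Subgroup G) [N.Normal]
    (hN : N ≤ Subgroup.center G) (x : G)
    (hx : Nat.Coprime (orderOf x) (Nat.card N)) :
    Nat.card {y : G | IsConj x y} =
      Nat.card {y : G ⧸ N | IsConj ((x : G ⧸ N)) y} :=
  stmt_6_general G N hN x hx
end

section
/- Let G be a finite group and let x, g be elements of G with x^g = x^{-1} (where x^g denotes g^{-1}xg). Then there exists an element t in the cyclic subgroup generated by g such that the order of t is a power of 2 and x^t = x^{-1}. -/
/-!
The square of `g` commutes with `x`, so every odd power of `g` still inverts `x`. Writing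
`orderOf g = 2 ^ m * k` with `k` odd, the element `t = g ^ k` inverts `x` and has order `2 ^ m`.
-/

theorem semiconjBy_iff_inv_mul_mul_eq {G : Type*} [Group G] {g x y : G} :
    SemiconjBy g y x ↔ g⁻¹ * x * g = y := by
  rw [SemiconjBy, mul_assoc, inv_mul_eq_iff_eq_mul, eq_comm]

theorem SemiconjBy.pow_of_odd {M : Type*} [Monoid M] {a x y : M} (hxy : SemiconjBy a x y)
    (hyx : SemiconjBy a y x) {k : ℕ} (hk : Odd k) : SemiconjBy (a ^ k) x y := by
  obtain ⟨m, rfl⟩ := hk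
  have hsq : Commute (a * a) x := hyx.mul_left hxy
  rw [pow_succ', pow_mul, sq]
  exact hxy.mul_left (hsq.pow_left m)

theorem exists_odd_orderOf_pow_eq_two_pow {G : Type*} [Monoid G] {g : G} (hg : IsOfFinOrder g) :
    ∃ k, Odd k ∧ ∃ m : ℕ, orderOf (g ^ k) = 2 ^ m := by
  obtain ⟨m, k, hk, hord⟩ := Nat.exists_eq_two_pow_mul_odd hg.orderOf_pos.ne'
  refine ⟨k, hk, m, ?_⟩
  rw [orderOf_pow_of_dvd hk.pos.ne' (hord ▸ dvd_mul_left k _), hord,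
    Nat.mul_div_cancel _ hk.pos]

/-- If `x^g = x⁻¹` in a finite group, then `x^t = x⁻¹` for some 2-element `t`
of the cyclic subgroup generated by `g`. -/
theorem stmt_7 (G : Type*) [Group G] [Finite G] (x g : G)
    (h : g⁻¹ * x * g = x⁻¹) :
    ∃ t ∈ Subgroup.zpowers g, (∃ m : ℕ, orderOf t = 2 ^ m) ∧
      t⁻¹ * x * t = x⁻¹ := by
  have hinv : SemiconjBy g x⁻¹ x := semiconjBy_iff_inv_mul_mul_eq.mpr h
  obtain ⟨k, hk, hord⟩ := exists_odd_orderOf_pow_eq_two_pow (isOfFinOrder_of_finite g)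
  exact ⟨g ^ k, Subgroup.pow_mem _ (Subgroup.mem_zpowers g) k, hord,
    semiconjBy_iff_inv_mul_mul_eq.mp (hinv.pow_of_odd (by simpa using hinv.inv_right) hk)⟩
end

section
/- Let G be the symmetric group Sym(4). Then every real element of G whose order is a power of an odd prime has conjugacy class size a power of 2 (so G satisfies: every odd prime power order real element has class size a power of 2 or not divisible by 4), G = O^{2'}(G), O_{2'}(G) is trivial, G does not have a normal Sylow 2-subgroup, and G does not have a normal 2-complement. -/
/-!
Every element of odd order in `Sym(4)` is `1` or a 3-cycle, with class size `1` or `8`.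
A normal subgroup of odd index contains every involution, in particular every transposition,
so it is all of `Sym(4)`; applied to a normal Sylow 2-subgroup this would make `24` a power of `2`.
A nontrivial normal subgroup of odd order would contain a 3-cycle `x`, hence `x * (g * x * g⁻¹)`
for all `g`, and for a suitable `g` this product is an involution. So `O_{2'}(Sym(4)) = 1`, and a
normal 2-complement would be trivial of index `24`.
-/

open Equiv

section

variable {G : Type*} [Group G]

theorem Subgroup.mem_of_odd_index_of_sq_eq_one (N : Subgroup G) [N.Normal] (hN : Odd N.index)
    {g : G} (hg : g ^ 2 = 1) : g ∈ N := by
  obtain ⟨k, hk⟩ := hN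
  simpa [hk, pow_succ, pow_mul, hg] using N.pow_index_mem g

theorem Subgroup.eq_one_of_odd_card_of_sq_eq_one (N : Subgroup G) (hN : Odd (Nat.card N))
    {g : G} (hgN : g ∈ N) (hg : g ^ 2 = 1) : g = 1 := by
  have h1 : orderOf g ∣ Nat.gcd 2 (Nat.card N) :=
    Nat.dvd_gcd (orderOf_dvd_of_pow_eq_one hg) (N.orderOf_dvd_natCard hgN)
  rw [hN.coprime_two_left.gcd_eq_one, Nat.dvd_one, orderOf_eq_one_iff] at h1
  exact h1

theorem card_setOf_isConj_eq_card_image [Fintype G] [DecidableEq G] (x : G) :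
    Nat.card {y | IsConj x y} = (Finset.univ.image fun c : G => c * x * c⁻¹).card := by
  have hclass : {y | IsConj x y} = Set.range fun c : G => c * x * c⁻¹ := by
    ext y
    simp [isConj_iff]
  rw [hclass, Nat.card_eq_card_toFinset, Set.toFinset_range]

end

theorem Equiv.Perm.eq_top_of_odd_index {α : Type*} [Finite α] [DecidableEq α]
    (N : Subgroup (Perm α)) [N.Normal] (hN : Odd N.index) : N = ⊤ := by
  rw [eq_top_iff, ← Perm.closure_isSwap, Subgroup.closure_le]
  rintro _ ⟨a, b, -, rfl⟩
  exact N.mem_of_odd_index_of_sq_eq_one hN (by rw [sq, swap_mul_self])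

namespace Equiv.Perm

theorem card_fin_four : Nat.card (Perm (Fin 4)) = 24 := by
  rw [Nat.card_perm, Nat.card_fin]
  rfl

theorem card_fin_four_ne_two_pow (n : ℕ) : Nat.card (Perm (Fin 4)) ≠ 2 ^ n := by
  rw [card_fin_four]
  intro h
  have h3 : 3 ∣ 2 ^ n := h ▸ by norm_num
  exact absurd (Nat.prime_three.dvd_of_dvd_pow h3) (by norm_num)

theorem pow_three_eq_one_of_odd_orderOf {x : Perm (Fin 4)} (hx : Odd (orderOf x)) :
    x ^ 3 = 1 := by
  rw [← orderOf_dvd_iff_pow_eq_one]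
  have h24 : orderOf x ∣ 3 * 2 ^ 3 := by
    have := orderOf_dvd_natCard x
    rwa [card_fin_four] at this
  exact (Nat.Coprime.pow_right 3 hx.coprime_two_right).dvd_of_dvd_mul_right h24

set_option maxRecDepth 10000 in
theorem card_image_conj_of_pow_three_eq_one : ∀ x : Perm (Fin 4), x ^ 3 = 1 →
    (Finset.univ.image fun c : Perm (Fin 4) => c * x * c⁻¹).card = 1 ∨
    (Finset.univ.image fun c : Perm (Fin 4) => c * x * c⁻¹).card = 8 := by
  decide

set_option maxRecDepth 10000 in
theorem exists_conj_mul_sq_eq_one_of_pow_three_eq_one :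
    ∀ x : Perm (Fin 4), x ^ 3 = 1 → x ≠ 1 →
      ∃ g : Perm (Fin 4), (x * (g * x * g⁻¹)) ^ 2 = 1 ∧ x * (g * x * g⁻¹) ≠ 1 := by
  decide

theorem card_setOf_isConj_of_odd_orderOf {x : Perm (Fin 4)} (hx : Odd (orderOf x)) :
    ∃ m : ℕ, Nat.card {y | IsConj x y} = 2 ^ m := by
  rw [card_setOf_isConj_eq_card_image]
  rcases card_image_conj_of_pow_three_eq_one x (pow_three_eq_one_of_odd_orderOf hx) with h | h
  · exact ⟨0, h⟩
  · exact ⟨3, h⟩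

theorem eq_bot_of_odd_card (N : Subgroup (Perm (Fin 4))) [N.Normal] (hN : Odd (Nat.card N)) :
    N = ⊥ := by
  refine N.bot_or_exists_ne_one.resolve_right ?_
  rintro ⟨x, hxN, hx1⟩
  have hx3 : x ^ 3 = 1 :=
    pow_three_eq_one_of_odd_orderOf (hN.of_dvd_nat (N.orderOf_dvd_natCard hxN))
  obtain ⟨g, hsq, hne⟩ := exists_conj_mul_sq_eq_one_of_pow_three_eq_one x hx3 hx1
  have hmem : x * (g * x * g⁻¹) ∈ N := N.mul_mem hxN (Subgroup.Normal.conj_mem ‹_› x hxN g)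
  exact hne (N.eq_one_of_odd_card_of_sq_eq_one hN hmem hsq)

end Equiv.Perm

/-- In `G = Sym(4)`: every real element of odd prime power order has
conjugacy class size a power of 2; `G = O^{2'}(G)`; `O_{2'}(G)` is trivial;
`G` has no normal Sylow 2-subgroup; and `G` has no normal 2-complement. -/
theorem stmt_17 :
    (∀ x : Equiv.Perm (Fin 4), IsConj x x⁻¹ →
      (∃ p k : ℕ, p.Prime ∧ Odd p ∧ orderOf x = p ^ k) →
      ∃ m : ℕ, Nat.card {y : Equiv.Perm (Fin 4) | IsConj x y} = 2 ^ m) ∧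
    (∀ N : Subgroup (Equiv.Perm (Fin 4)), N.Normal → Odd N.index → N = ⊤) ∧
    (∀ N : Subgroup (Equiv.Perm (Fin 4)), N.Normal → Odd (Nat.card N) → N = ⊥) ∧
    (¬ ∃ P : Sylow 2 (Equiv.Perm (Fin 4)), (P : Subgroup (Equiv.Perm (Fin 4))).Normal) ∧
    (¬ ∃ K : Subgroup (Equiv.Perm (Fin 4)), K.Normal ∧ Odd (Nat.card K) ∧
      ∃ m : ℕ, K.index = 2 ^ m) := by
  refine ⟨fun x _ ⟨p, k, _, hp, hx⟩ => Perm.card_setOf_isConj_of_odd_orderOf (hx ▸ hp.pow),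
    fun N _ hN => Perm.eq_top_of_odd_index N hN, fun N _ hN => Perm.eq_bot_of_odd_card N hN,
    ?_, ?_⟩
  · rintro ⟨P, hP⟩
    have : Fact (Nat.Prime 2) := ⟨Nat.prime_two⟩
    have hPtop : (P : Subgroup (Perm (Fin 4))) = ⊤ :=
      Perm.eq_top_of_odd_index _ (Nat.odd_iff.mpr (Nat.two_dvd_ne_zero.mp P.not_dvd_index))
    obtain ⟨n, hn⟩ := IsPGroup.iff_card.mp P.isPGroup'
    rw [hPtop, Subgroup.card_top] at hn
    exact Perm.card_fin_four_ne_two_pow n hn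
  · rintro ⟨K, hK, hodd, m, hm⟩
    rw [Perm.eq_bot_of_odd_card K hodd, Subgroup.index_bot] at hm
    exact Perm.card_fin_four_ne_two_pow m hm
end
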